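/- Let f be a Markov interval map, x ∈ E_f, and let T_i, P_i := T_i T_i*, Q_i := T_i* T_i be the associated operators on H_x. Then P_1,…,P_n are nonzero pairwise orthogonal projections (P_i P_j = 0 for i ≠ j), and Q_i P_j = a_{ij} P_j for all i,j ∈ {1,…,n}. -/
import Mathlib


open scoped Classical ENNReal

noncomputable section

/-- Partition and branch data for a Markov interval map with `n` Markov
subintervals.  `cm j` is the point `c_j⁻` and `cp j` is `c_j⁺` (with
`cm 0 = cp 0 = c₀` and `cm n = cp n = c_n`).  `f` is the globally defined map,
`F j` is the branch of `f` on the `j`-th Markov interval (indexed by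
`j = 0, …, n-1`, corresponding to the interval `I_{j+1}` of the paper) and
`F' j` is the derivative of that branch. -/
structure MarkovSystem (n : ℕ) where
  cm : ℕ → ℝ
  cp : ℕ → ℝ
  f : ℝ → ℝ
  F : ℕ → ℝ → ℝ
  F' : ℕ → ℝ → ℝ
  two_le : 2 ≤ n
  cm_zero : cm 0 = cp 0
  cm_n : cm n = cp n
  cm_le_cp : ∀ j ≤ n, cm j ≤ cp j
  cp_lt_cm : ∀ j < n, cp j < cm (j + 1)

namespace MarkovSystem

variable {n : ℕ} (M : MarkovSystem n)

/-- The Markov interval `I_{j+1} = [c_j⁺, c_{j+1}⁻]` (for `j < n`). -/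
def Ipart (j : ℕ) : Set ℝ := Set.Icc (M.cp j) (M.cm (j + 1))

/-- The escape interval `E_j = (c_j⁻, c_j⁺)` (for `1 ≤ j ≤ n-1`). -/
def Epart (j : ℕ) : Set ℝ := Set.Ioo (M.cm j) (M.cp j)

/-- The ambient interval `I = [c₀, c_n]`. -/
def itv : Set ℝ := Set.Icc (M.cm 0) (M.cm n)

/-- The domain of `f`, namely `⋃_{j=1}^n I_j`. -/
def dom : Set ℝ := ⋃ j ∈ Finset.range n, M.Ipart j

/-- The set `Γ` of partition boundary points. -/
def Gamma : Set ℝ := {y | ∃ j ≤ n, y = M.cm j ∨ y = M.cp j}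

/-- `q`-fold image of a set under `f`, applying `f` only where it is defined. -/
def iterImage : ℕ → Set ℝ → Set ℝ
  | 0, S => S
  | q + 1, S => M.f '' (iterImage q S ∩ M.dom)

/-- `f^k(x)` is defined, i.e. all earlier iterates lie in the domain. -/
def definedUpTo (k : ℕ) (x : ℝ) : Prop := ∀ l < k, M.f^[l] x ∈ M.dom

/-- The orbit equivalence relation `R_f`. -/
def Rrel (x y : ℝ) : Prop :=
  ∃ p q : ℕ, M.definedUpTo p x ∧ M.definedUpTo q y ∧ M.f^[p] x = M.f^[q] y

/-- The generalized orbit `R_f(x)` of a point `x ∈ I`. -/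
def Rclass (x : ℝ) : Set ℝ := {y | y ∈ M.itv ∧ M.Rrel x y}

/-- The maximal invariant set `Ω_f`. -/
def Omega : Set ℝ := {x | x ∈ M.itv ∧ ∀ k, M.f^[k] x ∈ M.dom}

/-- The escape set `E_f = I \ Ω_f`. -/
def Esc : Set ℝ := M.itv \ M.Omega

/-- The regular set `Λ_f = Ω_f \ R_f(Γ)`. -/
def Lambda : Set ℝ := {x | x ∈ M.Omega ∧ ∀ γ ∈ M.Gamma, ¬ M.Rrel x γ}

/-- The escape time of a point of the escape set. -/
def tau (x : ℝ) : ℕ := sInf {k | M.f^[k] x ∉ M.dom}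

/-- The final escape point `e(x) = f^{τ(x)}(x)`. -/
def e (x : ℝ) : ℝ := M.f^[M.tau x] x

/-- The transition-matrix condition `a_{ij} = 1`, i.e. `f(int I_i) ⊇ int I_j`. -/
def trans (i j : ℕ) : Prop := interior (M.Ipart j) ⊆ M.F i '' interior (M.Ipart i)

/-- The escape-transition condition `â_{ik} = 1`, i.e. `int I_i ∩ f⁻¹(E_k) ≠ ∅`. -/
def ahat (i k : ℕ) : Prop := (interior (M.Ipart i) ∩ M.F i ⁻¹' M.Epart k).Nonempty

end MarkovSystem

/-- The defining properties (P1)-(P4) of a Markov interval map, together with the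
compatibility of the global map `f` with the branches `F j`:  `f` agrees with `F j`
on `I_j` except possibly at a boundary point shared with an adjacent interval,
where `f` is given by one of the two adjacent branches. -/
structure IsMarkov {n : ℕ} (M : MarkovSystem n) : Prop where
  compat₁ : ∀ j < n, ∀ x ∈ M.Ipart j, (∀ k < n, k ≠ j → x ∉ M.Ipart k) → M.f x = M.F j x
  compat₂ : ∀ x ∈ M.dom, ∃ j, j < n ∧ x ∈ M.Ipart j ∧ M.f x = M.F j x
  maps_into : ∀ j < n, M.F j '' M.Ipart j ⊆ M.itv
  onto : M.itv ⊆ ⋃ j ∈ Finset.range n, M.F j '' M.Ipart j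
  markov : ∀ i < n, ∃ S T : Set ℕ, S ⊆ {j | j < n} ∧ T ⊆ {j | 1 ≤ j ∧ j < n} ∧
    M.F i '' M.Ipart i = (⋃ j ∈ S, M.Ipart j) ∪ (⋃ j ∈ T, M.Epart j)
  deriv : ∀ i < n, ∀ x ∈ M.Ipart i, HasDerivWithinAt (M.F i) (M.F' i x) (M.Ipart i) x
  derivCont : ∀ i < n, ContinuousOn (M.F' i) (M.Ipart i)
  mono : ∀ i < n, StrictMonoOn (M.F i) (M.Ipart i) ∨ StrictAntiOn (M.F i) (M.Ipart i)
  expansive : ∃ b > 1, ∀ i < n, ∀ x ∈ M.Ipart i, b < |M.F' i x|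
  aperiodic : ∀ i < n, ∃ q, M.dom ⊆ M.iterImage q (M.Ipart i)

namespace MarkovSystem

variable {n : ℕ} (M : MarkovSystem n)

/-- The Hilbert space `H_x = ℓ²(R_f(x))`. -/
abbrev Hsp (x : ℝ) : Type _ := lp (fun _ : M.Rclass x => ℂ) 2

/-- The canonical orthonormal basis vector `δ_z` of `H_x`, for `z ∈ R_f(x)`. -/
def dvec {x : ℝ} (z : M.Rclass x) : M.Hsp x := lp.single 2 z 1

/-- `T` is the bounded operator `T_i` on `H_x`, determined on the basis by
`T_i δ_y = δ_{(f|_{I_i})⁻¹(y)}` if `y ∈ f(I_i)` and `T_i δ_y = 0` otherwise. -/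
def IsBranchOp (x : ℝ) (i : ℕ) (T : M.Hsp x →L[ℂ] M.Hsp x) : Prop :=
  (∀ z w : M.Rclass x, (w : ℝ) ∈ M.Ipart i → M.F i w = (z : ℝ) →
      T (M.dvec z) = M.dvec w) ∧
  (∀ z : M.Rclass x, (z : ℝ) ∉ M.F i '' M.Ipart i → T (M.dvec z) = 0)

/-- `Pe` is the rank-one orthogonal projection onto `ℂ δ_{e(x)}`. -/
def IsEscProj (x : ℝ) (Pe : M.Hsp x →L[ℂ] M.Hsp x) : Prop :=
  ∀ z : M.Rclass x, Pe (M.dvec z) = if (z : ℝ) = M.e x then M.dvec z else 0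

end MarkovSystem

namespace MarkovSystem

variable {n : ℕ} (M : MarkovSystem n)

/-- The set of endpoints of the Markov intervals. -/
def Bdry : Set ℝ := {y | ∃ k < n, y = M.cp k ∨ y = M.cm (k + 1)}

lemma cp_lt_cm_of_lt {a b : ℕ} (h : a < b) (hb : b ≤ n) : M.cp a < M.cm b := by
  induction b with
  | zero => omega
  | succ b ih =>
    rcases Nat.lt_succ_iff_lt_or_eq.mp h with h' | h'
    · exact lt_of_lt_of_le (lt_of_lt_of_le (ih h' (by omega))
        (M.cm_le_cp b (by omega))) (M.cp_lt_cm b (by omega)).le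
    · subst h'; exact M.cp_lt_cm a (by omega)

lemma cp_mono {a b : ℕ} (h : a ≤ b) (hb : b ≤ n) : M.cp a ≤ M.cp b := by
  rcases eq_or_lt_of_le h with rfl | h'
  · exact le_refl _
  · exact (M.cp_lt_cm_of_lt h' hb).le.trans (M.cm_le_cp b hb)

lemma cm_mono {a b : ℕ} (h : a ≤ b) (hb : b ≤ n) : M.cm a ≤ M.cm b := by
  rcases eq_or_lt_of_le h with rfl | h'
  · exact le_refl _
  · exact (M.cm_le_cp a (h.trans hb)).trans (M.cp_lt_cm_of_lt h' hb).le

lemma Ipart_lt {k : ℕ} (hk : k < n) : M.cp k < M.cm (k + 1) := M.cp_lt_cm k hk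

lemma Ipart_subset_itv {k : ℕ} (hk : k < n) : M.Ipart k ⊆ M.itv := by
  intro z hz
  refine ⟨le_trans ?_ hz.1, le_trans hz.2 ?_⟩
  · rw [M.cm_zero]; exact M.cp_mono (Nat.zero_le k) hk.le
  · exact M.cm_mono hk le_rfl
  
end MarkovSystem

namespace MarkovSystem

variable {n : ℕ} (M : MarkovSystem n)

lemma mem_Ipart_iff {k z} : z ∈ M.Ipart k ↔ M.cp k ≤ z ∧ z ≤ M.cm (k + 1) := Iff.rfl

lemma cp_mem_Ipart {k : ℕ} (hk : k < n) : M.cp k ∈ M.Ipart k :=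
  ⟨le_rfl, (M.Ipart_lt hk).le⟩

lemma cm_succ_mem_Ipart {k : ℕ} (hk : k < n) : M.cm (k + 1) ∈ M.Ipart k :=
  ⟨(M.Ipart_lt hk).le, le_rfl⟩

lemma Ipart_subset_dom {k : ℕ} (hk : k < n) : M.Ipart k ⊆ M.dom := by
  intro z hz
  exact Set.mem_biUnion (Finset.mem_range.mpr hk) hz

lemma overlap {i j : ℕ} (hi : i < n) (hj : j < n) (hij : i ≠ j) {z : ℝ}
    (h1 : z ∈ M.Ipart i) (h2 : z ∈ M.Ipart j) : z = M.cp i ∨ z = M.cm (i + 1) := by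
  rcases lt_or_gt_of_ne hij with h | h
  · -- i < j : z = cm (i+1)
    right
    have h3 : M.cm (i + 1) ≤ M.cp j :=
      le_trans (M.cm_le_cp (i + 1) (by omega)) (M.cp_mono (by omega) hj.le)
    exact le_antisymm h1.2 (h3.trans h2.1)
  · -- j < i : z = cp i
    left
    have h3 : M.cm (j + 1) ≤ M.cp i :=
      le_trans (M.cm_le_cp (j + 1) (by omega)) (M.cp_mono (by omega) hi.le)
    exact le_antisymm (h2.2.trans h3) h1.1

lemma mem_Bdry_of_overlap {i j : ℕ} (hi : i < n) (hj : j < n) (hij : i ≠ j) {z : ℝ}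
    (h1 : z ∈ M.Ipart i) (h2 : z ∈ M.Ipart j) : z ∈ M.Bdry := by
  rcases M.overlap hi hj hij h1 h2 with h | h
  · exact ⟨i, hi, Or.inl h⟩
  · exact ⟨i, hi, Or.inr h⟩

lemma Epart_Ipart_disj {k j : ℕ} (_hk1 : 1 ≤ k) (hk : k < n) (hj : j < n) {z : ℝ}
    (hE : z ∈ M.Epart k) (hI : z ∈ M.Ipart j) : False := by
  rcases le_or_gt k j with h | h
  · exact absurd (le_trans (M.cp_mono h hj.le) hI.1) (not_le.mpr hE.2)
  · exact absurd (hI.2.trans (M.cm_mono h (by omega))) (not_le.mpr hE.1)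

lemma Bdry_mem_Ipart {z : ℝ} (hz : z ∈ M.Bdry) :
    ∃ k < n, z ∈ M.Ipart k ∧ (z = M.cp k ∨ z = M.cm (k + 1)) := by
  obtain ⟨k, hk, h | h⟩ := hz
  · exact ⟨k, hk, h ▸ M.cp_mem_Ipart hk, Or.inl h⟩
  · exact ⟨k, hk, h ▸ M.cm_succ_mem_Ipart hk, Or.inr h⟩

lemma Bdry_subset_dom : M.Bdry ⊆ M.dom := by
  intro z hz
  obtain ⟨k, hk, hmem, -⟩ := M.Bdry_mem_Ipart hz
  exact M.Ipart_subset_dom hk hmem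

/-- If `z` lies in `I_j` and is an endpoint of some Markov interval, it is an
endpoint of `I_j`. -/
lemma Bdry_endpoint {j : ℕ} (hj : j < n) {z : ℝ} (hz : z ∈ M.Bdry)
    (hzj : z ∈ M.Ipart j) : z = M.cp j ∨ z = M.cm (j + 1) := by
  obtain ⟨k, hk, hmem, hend⟩ := M.Bdry_mem_Ipart hz
  rcases eq_or_ne k j with rfl | hne
  · exact hend
  · exact M.overlap hj hk (Ne.symm hne) hzj hmem

end MarkovSystem

namespace MarkovSystem

variable {n : ℕ} {M : MarkovSystem n}

lemma contOn (hM : IsMarkov M) {i : ℕ} (hi : i < n) :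
    ContinuousOn (M.F i) (M.Ipart i) :=
  fun z hz => (hM.deriv i hi z hz).continuousWithinAt

lemma injOn (hM : IsMarkov M) {i : ℕ} (hi : i < n) :
    Set.InjOn (M.F i) (M.Ipart i) := by
  rcases hM.mono i hi with h | h
  · exact h.injOn
  · exact h.injOn

/-- An extreme point of the image `F_i(I_i)` is a boundary point. -/
lemma extreme_mem_Bdry (hM : IsMarkov M) {i : ℕ} (hi : i < n) {m : ℝ}
    (hm : m ∈ M.F i '' M.Ipart i)
    (hext : (∀ y ∈ M.F i '' M.Ipart i, m ≤ y) ∨ ∀ y ∈ M.F i '' M.Ipart i, y ≤ m) :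
    m ∈ M.Bdry := by
  obtain ⟨S, T, hS, hT, hdec⟩ := hM.markov i hi
  rw [hdec] at hm
  rcases hm with hm | hm
  · -- m lies in some Markov interval `I_k`, `k ∈ S`
    obtain ⟨k, hkS, hmk⟩ := Set.mem_iUnion₂.mp hm
    have hk : k < n := hS hkS
    have hIk : M.Ipart k ⊆ M.F i '' M.Ipart i := by
      rw [hdec]
      exact fun y hy => Or.inl (Set.mem_iUnion₂.mpr ⟨k, hkS, hy⟩)
    rcases hext with hext | hext
    · have h1 : m ≤ M.cp k := hext _ (hIk (M.cp_mem_Ipart hk))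
      exact ⟨k, hk, Or.inl (le_antisymm h1 hmk.1)⟩
    · have h1 : M.cm (k + 1) ≤ m := hext _ (hIk (M.cm_succ_mem_Ipart hk))
      exact ⟨k, hk, Or.inr (le_antisymm hmk.2 h1)⟩
  · -- m lies in some escape interval: impossible
    obtain ⟨k, hkT, hmk⟩ := Set.mem_iUnion₂.mp hm
    have hEk : M.Epart k ⊆ M.F i '' M.Ipart i := by
      rw [hdec]
      exact fun y hy => Or.inr (Set.mem_iUnion₂.mpr ⟨k, hkT, hy⟩)
    rcases hext with hext | hext
    · have hy : (M.cm k + m) / 2 ∈ M.Epart k :=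
        ⟨by simp only [Epart, Set.mem_Ioo] at hmk ⊢; linarith [hmk.1],
         by simp only [Epart, Set.mem_Ioo] at hmk ⊢; linarith [hmk.1, hmk.2]⟩
      have := hext _ (hEk hy)
      simp only [Epart, Set.mem_Ioo] at hmk
      linarith [hmk.1]
    · have hy : (m + M.cp k) / 2 ∈ M.Epart k :=
        ⟨by simp only [Epart, Set.mem_Ioo] at hmk ⊢; linarith [hmk.1, hmk.2],
         by simp only [Epart, Set.mem_Ioo] at hmk ⊢; linarith [hmk.2]⟩
      have := hext _ (hEk hy)
      simp only [Epart, Set.mem_Ioo] at hmk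
      linarith [hmk.2]

/-- The image of an endpoint of `I_i` is an extreme point of the image. -/
lemma endpoint_image_extreme (hM : IsMarkov M) {i : ℕ} (hi : i < n) {z : ℝ}
    (hz : z = M.cp i ∨ z = M.cm (i + 1)) :
    M.F i z ∈ M.F i '' M.Ipart i ∧
      ((∀ y ∈ M.F i '' M.Ipart i, M.F i z ≤ y) ∨
        ∀ y ∈ M.F i '' M.Ipart i, y ≤ M.F i z) := by
  have hzI : z ∈ M.Ipart i := by
    rcases hz with rfl | rfl
    · exact M.cp_mem_Ipart hi
    · exact M.cm_succ_mem_Ipart hi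
  refine ⟨Set.mem_image_of_mem _ hzI, ?_⟩
  rcases hM.mono i hi with hmono | hmono
  · rcases hz with rfl | rfl
    · exact Or.inl (by rintro y ⟨w, hw, rfl⟩; exact hmono.monotoneOn hzI hw hw.1)
    · exact Or.inr (by rintro y ⟨w, hw, rfl⟩; exact hmono.monotoneOn hw hzI hw.2)
  · rcases hz with rfl | rfl
    · exact Or.inr (by rintro y ⟨w, hw, rfl⟩; exact hmono.antitoneOn hzI hw hw.1)
    · exact Or.inl (by rintro y ⟨w, hw, rfl⟩; exact hmono.antitoneOn hw hzI hw.2)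

lemma Bdry_maps (hM : IsMarkov M) {z : ℝ} (hz : z ∈ M.Bdry) : M.f z ∈ M.Bdry := by
  obtain ⟨j, hj, hzj, hfz⟩ := hM.compat₂ z (M.Bdry_subset_dom hz)
  have hend : z = M.cp j ∨ z = M.cm (j + 1) := M.Bdry_endpoint hj hz hzj
  have hext := endpoint_image_extreme hM hj hend
  rw [hfz]
  exact extreme_mem_Bdry hM hj hext.1 hext.2

lemma Bdry_iterate (hM : IsMarkov M) {z : ℝ} (hz : z ∈ M.Bdry) (m : ℕ) :
    M.f^[m] z ∈ M.Bdry := by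
  induction m with
  | zero => exact hz
  | succ m ih => rw [Function.iterate_succ_apply']; exact Bdry_maps hM ih

lemma Bdry_no_escape (hM : IsMarkov M) {z : ℝ} (hz : z ∈ M.Bdry) (m : ℕ) :
    M.f^[m] z ∈ M.dom :=
  M.Bdry_subset_dom (Bdry_iterate hM hz m)

lemma Rclass_escapes {x z : ℝ} (hx : x ∈ M.Esc) (hz : z ∈ M.Rclass x) :
    ∃ k, M.f^[k] z ∉ M.dom := by
  obtain ⟨hxI, hxO⟩ := hx
  have hk0 : ∃ k0, M.f^[k0] x ∉ M.dom := by
    by_contra h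
    push_neg at h
    exact hxO ⟨hxI, h⟩
  obtain ⟨k0, hk0⟩ := hk0
  obtain ⟨p, q, hp, hq, he⟩ := hz.2
  have hpk : p ≤ k0 := by
    by_contra h
    exact hk0 (hp k0 (not_le.mp h))
  refine ⟨(k0 - p) + q, ?_⟩
  rw [Function.iterate_add_apply, ← he, ← Function.iterate_add_apply,
    Nat.sub_add_cancel hpk]
  exact hk0

lemma Rclass_not_Bdry (hM : IsMarkov M) {x z : ℝ} (hx : x ∈ M.Esc)
    (hz : z ∈ M.Rclass x) : z ∉ M.Bdry := by
  intro hB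
  obtain ⟨k, hk⟩ := Rclass_escapes hx hz
  exact hk (Bdry_no_escape hM hB k)

end MarkovSystem

namespace MarkovSystem

variable {n : ℕ} {M : MarkovSystem n}

/-- Away from boundary points, the global map agrees with the branch. -/
lemma f_eq_F (hM : IsMarkov M) {i : ℕ} (hi : i < n) {w : ℝ} (hw : w ∈ M.Ipart i)
    (hB : w ∉ M.Bdry) : M.f w = M.F i w := by
  refine hM.compat₁ i hi w hw ?_
  intro k hk hki hwk
  exact hB (M.mem_Bdry_of_overlap hi hk (Ne.symm hki) hw hwk)

/-- The branch preimage of a point of `R_f(x)` is again in `R_f(x)`. -/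
lemma preimage_mem_Rclass (hM : IsMarkov M) {x : ℝ} (hx : x ∈ M.Esc) {i : ℕ}
    (hi : i < n) {z w : ℝ} (hz : z ∈ M.Rclass x) (hw : w ∈ M.Ipart i)
    (hF : M.F i w = z) : w ∈ M.Rclass x ∧ M.f w = z := by
  have hwB : w ∉ M.Bdry := by
    intro hB
    have hend : w = M.cp i ∨ w = M.cm (i + 1) := M.Bdry_endpoint hi hB hw
    have hext := endpoint_image_extreme hM hi hend
    have : z ∈ M.Bdry := hF ▸ extreme_mem_Bdry hM hi hext.1 hext.2
    exact Rclass_not_Bdry hM hx hz this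
  have hfw : M.f w = z := by rw [f_eq_F hM hi hw hwB, hF]
  obtain ⟨p, q, hp, hq, he⟩ := hz.2
  refine ⟨⟨M.Ipart_subset_itv hi hw, p, q + 1, hp, ?_, ?_⟩, hfw⟩
  · intro l hl
    rcases Nat.eq_zero_or_pos l with rfl | hl0
    · exact M.Ipart_subset_dom hi hw
    · obtain ⟨l', rfl⟩ := Nat.exists_eq_succ_of_ne_zero hl0.ne'
      rw [Function.iterate_succ_apply, hfw]
      exact hq l' (by omega)
  · rw [Function.iterate_succ_apply, hfw, he]

/-- The branch image of a point of `R_f(x) ∩ I_i` is again in `R_f(x)`. -/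
lemma image_mem_Rclass (hM : IsMarkov M) {x : ℝ} (hx : x ∈ M.Esc) {i : ℕ}
    (hi : i < n) {z : ℝ} (hz : z ∈ M.Rclass x) (hzi : z ∈ M.Ipart i) :
    M.F i z ∈ M.Rclass x := by
  have hzB : z ∉ M.Bdry := Rclass_not_Bdry hM hx hz
  have hfz : M.f z = M.F i z := f_eq_F hM hi hzi hzB
  have hitv : M.F i z ∈ M.itv := hM.maps_into i hi (Set.mem_image_of_mem _ hzi)
  obtain ⟨p, q, hp, hq, he⟩ := hz.2
  rcases Nat.eq_zero_or_pos q with rfl | hq0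
  · -- z = f^[p] x
    refine ⟨hitv, p + 1, 0, ?_, fun l hl => by omega, ?_⟩
    · intro l hl
      rcases Nat.lt_succ_iff_lt_or_eq.mp hl with h | rfl
      · exact hp l h
      · rw [he]; exact M.Ipart_subset_dom hi hzi
    · simp only [Function.iterate_succ_apply', he, Function.iterate_zero_apply, hfz]
  · obtain ⟨q', rfl⟩ := Nat.exists_eq_succ_of_ne_zero hq0.ne'
    refine ⟨hitv, p, q', hp, ?_, ?_⟩
    · intro l hl
      rw [← hfz, ← Function.iterate_succ_apply]
      exact hq (l + 1) (by omega)
    · rw [← hfz, ← Function.iterate_succ_apply, he]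

lemma iterImage_spec {q : ℕ} {S : Set ℝ} {w : ℝ} (h : w ∈ M.iterImage q S) :
    ∃ u ∈ S, M.definedUpTo q u ∧ M.f^[q] u = w := by
  induction q generalizing w with
  | zero => exact ⟨w, h, fun l hl => by omega, rfl⟩
  | succ q ih =>
    obtain ⟨v, ⟨hv1, hv2⟩, rfl⟩ := h
    obtain ⟨u, hu, hdef, hit⟩ := ih hv1
    refine ⟨u, hu, ?_, ?_⟩
    · intro l hl
      rcases Nat.lt_succ_iff_lt_or_eq.mp hl with h' | rfl
      · exact hdef l h'
      · rw [hit]; exact hv2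
    · rw [Function.iterate_succ_apply', hit]

lemma x_mem_Rclass {x : ℝ} (hx : x ∈ M.Esc) : x ∈ M.Rclass x :=
  ⟨hx.1, 0, 0, fun l hl => by omega, fun l hl => by omega, rfl⟩

/-- Every Markov interval contains a point of the generalized orbit. -/
lemma exists_mem_Rclass_Ipart (hM : IsMarkov M) {x : ℝ} (hx : x ∈ M.Esc) {i : ℕ}
    (hi : i < n) : ∃ u, u ∈ M.Rclass x ∧ u ∈ M.Ipart i := by
  have hxitv : x ∈ M.itv := hx.1
  obtain ⟨j, hj', w, hw, hFw⟩ := by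
    have := hM.onto hxitv
    simpa using this
  have hjn : j < n := by simpa using hj'
  obtain ⟨hwR, hfw⟩ := preimage_mem_Rclass hM hx hjn (x_mem_Rclass hx) hw hFw
  obtain ⟨q, hq⟩ := hM.aperiodic i hi
  obtain ⟨u, hu, hdef, hit⟩ := iterImage_spec (hq (M.Ipart_subset_dom hjn hw))
  refine ⟨u, ⟨M.Ipart_subset_itv hi hu, ?_⟩, hu⟩
  obtain ⟨p, r, hp, hr, he⟩ := hwR.2
  refine ⟨p, r + q, hp, ?_, ?_⟩
  · intro l hl
    rcases lt_or_ge l q with h | h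
    · exact hdef l h
    · obtain ⟨s, rfl⟩ := Nat.exists_eq_add_of_le h
      rw [Nat.add_comm q s, Function.iterate_add_apply, hit]
      exact hr s (by omega)
  · rw [Function.iterate_add_apply, hit, he]

/-- If `a_{ij} = 1` then `I_j ⊆ F_i(I_i)`. -/
lemma subset_image_of_trans (hM : IsMarkov M) {i j : ℕ} (hi : i < n) (hj : j < n)
    (ht : M.trans i j) : M.Ipart j ⊆ M.F i '' M.Ipart i := by
  have hcl : IsClosed (M.F i '' M.Ipart i) :=
    (isCompact_Icc.image_of_continuousOn (contOn hM hi)).isClosed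
  have h1 : M.Ipart j = closure (interior (M.Ipart j)) := by
    rw [Ipart, interior_Icc, closure_Ioo (M.Ipart_lt hj).ne]
  rw [h1]
  calc closure (interior (M.Ipart j)) ⊆ closure (M.F i '' interior (M.Ipart i)) :=
        closure_mono ht
    _ ⊆ closure (M.F i '' M.Ipart i) :=
        closure_mono (Set.image_mono interior_subset)
    _ = M.F i '' M.Ipart i := hcl.closure_eq

/-- If a point of the orbit lies in `I_j ∩ F_i(I_i)` then `a_{ij} = 1`. -/
lemma trans_of_mem (hM : IsMarkov M) {x : ℝ} (hx : x ∈ M.Esc) {i j : ℕ}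
    (hi : i < n) (hj : j < n) {z : ℝ} (hz : z ∈ M.Rclass x) (hzj : z ∈ M.Ipart j)
    (hzim : z ∈ M.F i '' M.Ipart i) : M.trans i j := by
  obtain ⟨S, T, hS, hT, hdec⟩ := hM.markov i hi
  have hzim' := hzim
  rw [hdec] at hzim'
  have hIj : M.Ipart j ⊆ M.F i '' M.Ipart i := by
    rcases hzim' with hm | hm
    · obtain ⟨k, hkS, hmk⟩ := Set.mem_iUnion₂.mp hm
      have hk : k < n := hS hkS
      rcases eq_or_ne k j with rfl | hne
      · rw [hdec]
        exact fun y hy => Or.inl (Set.mem_iUnion₂.mpr ⟨k, hkS, hy⟩)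
      · exact absurd (M.mem_Bdry_of_overlap hk hj hne hmk hzj)
          (Rclass_not_Bdry hM hx hz)
    · obtain ⟨k, hkT, hmk⟩ := Set.mem_iUnion₂.mp hm
      exact (M.Epart_Ipart_disj (hT hkT).1 (hT hkT).2 hj hmk hzj).elim
  -- now derive the transition property
  intro y hy
  rw [Ipart, interior_Icc] at hy ⊢
  set a := M.cp i
  set b := M.cm (i + 1)
  have hab : a ≤ b := (M.Ipart_lt hi).le
  have hcont : ContinuousOn (M.F i) (Set.Icc a b) := contOn hM hi
  have hcpj : M.cp j ∈ M.F i '' M.Ipart i := hIj (M.cp_mem_Ipart hj)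
  have hcmj : M.cm (j + 1) ∈ M.F i '' M.Ipart i := hIj (M.cm_succ_mem_Ipart hj)
  rcases hM.mono i hi with hmono | hmono
  · have hsub : M.F i '' M.Ipart i ⊆ Set.Icc (M.F i a) (M.F i b) := by
      rintro y' ⟨w, hw, rfl⟩
      exact ⟨hmono.monotoneOn (M.cp_mem_Ipart hi) hw hw.1,
        hmono.monotoneOn hw (M.cm_succ_mem_Ipart hi) hw.2⟩
    refine intermediate_value_Ioo hab hcont ?_
    exact ⟨lt_of_le_of_lt (hsub hcpj).1 hy.1, lt_of_lt_of_le hy.2 (hsub hcmj).2⟩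
  · have hsub : M.F i '' M.Ipart i ⊆ Set.Icc (M.F i b) (M.F i a) := by
      rintro y' ⟨w, hw, rfl⟩
      exact ⟨hmono.antitoneOn hw (M.cm_succ_mem_Ipart hi) hw.2,
        hmono.antitoneOn (M.cp_mem_Ipart hi) hw hw.1⟩
    refine intermediate_value_Ioo' hab hcont ?_
    exact ⟨lt_of_le_of_lt (hsub hcpj).1 hy.1, lt_of_lt_of_le hy.2 (hsub hcmj).2⟩

end MarkovSystem

namespace MarkovSystem

open scoped ComplexInnerProductSpace

variable {n : ℕ} {M : MarkovSystem n} {x : ℝ}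

lemma dvec_apply_self (z : M.Rclass x) : (M.dvec z) z = 1 :=
  lp.single_apply_self 2 z 1

lemma dvec_apply_ne (z : M.Rclass x) {w : M.Rclass x} (h : w ≠ z) :
    (M.dvec z) w = 0 :=
  lp.single_apply_ne 2 z 1 h

lemma dvec_ne_zero (z : M.Rclass x) : M.dvec z ≠ 0 := by
  intro h
  have h1 : (M.dvec z) z = 0 := by rw [h]; simp
  rw [dvec_apply_self] at h1
  exact one_ne_zero h1

lemma coord_eq_inner (v : M.Hsp x) (w : M.Rclass x) : ⟪M.dvec w, v⟫ = v w := by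
  rw [dvec, lp.inner_single_left]
  simp [RCLike.inner_apply]

lemma star_apply_coord (T : M.Hsp x →L[ℂ] M.Hsp x) (z w : M.Rclass x) :
    (star T) (M.dvec z) w = ⟪T (M.dvec w), M.dvec z⟫ := by
  rw [← coord_eq_inner, ContinuousLinearMap.star_eq_adjoint,
    ContinuousLinearMap.adjoint_inner_right]

lemma inner_dvec_dvec (v z : M.Rclass x) :
    ⟪M.dvec v, M.dvec z⟫ = if v = z then 1 else 0 := by
  rw [coord_eq_inner]
  rcases eq_or_ne v z with rfl | h
  · rw [dvec_apply_self, if_pos rfl]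
  · rw [dvec_apply_ne _ h, if_neg h]

lemma clm_ext {A B : M.Hsp x →L[ℂ] M.Hsp x}
    (h : ∀ z : M.Rclass x, A (M.dvec z) = B (M.dvec z)) : A = B := by
  refine ContinuousLinearMap.ext fun f => ?_
  have hs : HasSum (fun z : M.Rclass x => lp.single 2 z (f z)) f :=
    lp.hasSum_single (by norm_num) f
  have hA := hs.mapL A
  have hB := hs.mapL B
  have heq : (fun z : M.Rclass x => A (lp.single 2 z (f z))) =
      fun z : M.Rclass x => B (lp.single 2 z (f z)) := by
    funext z
    have h1 : lp.single (E := fun _ : M.Rclass x => ℂ) 2 z (f z) = f z • M.dvec z := by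
      rw [dvec, ← lp.single_smul]
      simp
    rw [h1, map_smul, map_smul, h z]
  rw [heq] at hA
  exact hA.unique hB

end MarkovSystem

namespace MarkovSystem

open scoped ComplexInnerProductSpace

variable {n : ℕ} {M : MarkovSystem n} {x : ℝ}

lemma T_dvec_of_image (hM : IsMarkov M) (hx : x ∈ M.Esc) {i : ℕ} (hi : i < n)
    {T : M.Hsp x →L[ℂ] M.Hsp x} (hT : M.IsBranchOp x i T) (w : M.Rclass x)
    (hw : (w : ℝ) ∈ M.F i '' M.Ipart i) :
    ∃ v : M.Rclass x, (v : ℝ) ∈ M.Ipart i ∧ M.F i v = (w : ℝ) ∧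
      T (M.dvec w) = M.dvec v := by
  obtain ⟨v0, hv0, hFv⟩ := hw
  have hv0R := (preimage_mem_Rclass hM hx hi w.2 hv0 hFv).1
  exact ⟨⟨v0, hv0R⟩, hv0, hFv, hT.1 w ⟨v0, hv0R⟩ hv0 hFv⟩

lemma star_dvec_mem (hM : IsMarkov M) (hx : x ∈ M.Esc) {i : ℕ} (hi : i < n)
    {T : M.Hsp x →L[ℂ] M.Hsp x} (hT : M.IsBranchOp x i T) (z : M.Rclass x)
    (hz : (z : ℝ) ∈ M.Ipart i) :
    (star T) (M.dvec z) = M.dvec ⟨M.F i z, image_mem_Rclass hM hx hi z.2 hz⟩ := by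
  set z' : M.Rclass x := ⟨M.F i z, image_mem_Rclass hM hx hi z.2 hz⟩ with hz'
  refine lp.ext (funext fun w => ?_)
  rw [star_apply_coord]
  by_cases hw : (w : ℝ) ∈ M.F i '' M.Ipart i
  · obtain ⟨v, hvI, hvF, hTw⟩ := T_dvec_of_image hM hx hi hT w hw
    rw [hTw, inner_dvec_dvec]
    by_cases hwz : w = z'
    · have hveq : (v : ℝ) = (z : ℝ) :=
        injOn hM hi hvI hz (by rw [hvF, hwz])
      rw [if_pos (Subtype.ext hveq), hwz, dvec_apply_self]
    · have hv : v ≠ z := by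
        intro h
        exact hwz (Subtype.ext (by rw [← hvF, h]))
      rw [if_neg hv, dvec_apply_ne _ hwz]
  · rw [hT.2 w hw]
    have hne : w ≠ z' := by
      intro h
      exact hw (by rw [h]; exact Set.mem_image_of_mem _ hz)
    rw [dvec_apply_ne _ hne]
    simp

lemma star_dvec_not {i : ℕ} (hM : IsMarkov M) (hx : x ∈ M.Esc) (hi : i < n)
    {T : M.Hsp x →L[ℂ] M.Hsp x} (hT : M.IsBranchOp x i T) (z : M.Rclass x)
    (hz : (z : ℝ) ∉ M.Ipart i) : (star T) (M.dvec z) = 0 := by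
  refine lp.ext (funext fun w => ?_)
  rw [star_apply_coord]
  by_cases hw : (w : ℝ) ∈ M.F i '' M.Ipart i
  · obtain ⟨v, hvI, hvF, hTw⟩ := T_dvec_of_image hM hx hi hT w hw
    rw [hTw, inner_dvec_dvec, if_neg (fun h => hz (by cases h; exact hvI))]
    simp
  · rw [hT.2 w hw]
    simp

lemma P_dvec_mem (hM : IsMarkov M) (hx : x ∈ M.Esc) {i : ℕ} (hi : i < n)
    {T : M.Hsp x →L[ℂ] M.Hsp x} (hT : M.IsBranchOp x i T) (z : M.Rclass x)
    (hz : (z : ℝ) ∈ M.Ipart i) : (T * star T) (M.dvec z) = M.dvec z := by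
  rw [ContinuousLinearMap.mul_apply, star_dvec_mem hM hx hi hT z hz]
  exact hT.1 ⟨M.F i z, image_mem_Rclass hM hx hi z.2 hz⟩ z hz rfl

lemma P_dvec_not (hM : IsMarkov M) (hx : x ∈ M.Esc) {i : ℕ} (hi : i < n)
    {T : M.Hsp x →L[ℂ] M.Hsp x} (hT : M.IsBranchOp x i T) (z : M.Rclass x)
    (hz : (z : ℝ) ∉ M.Ipart i) : (T * star T) (M.dvec z) = 0 := by
  rw [ContinuousLinearMap.mul_apply, star_dvec_not hM hx hi hT z hz, map_zero]

lemma Q_dvec_mem (hM : IsMarkov M) (hx : x ∈ M.Esc) {i : ℕ} (hi : i < n)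
    {T : M.Hsp x →L[ℂ] M.Hsp x} (hT : M.IsBranchOp x i T) (z : M.Rclass x)
    (hz : (z : ℝ) ∈ M.F i '' M.Ipart i) : (star T * T) (M.dvec z) = M.dvec z := by
  rw [ContinuousLinearMap.mul_apply]
  obtain ⟨v, hvI, hvF, hTz⟩ := T_dvec_of_image hM hx hi hT z hz
  rw [hTz, star_dvec_mem hM hx hi hT v hvI]
  congr 1
  exact Subtype.ext hvF

lemma Q_dvec_not {i : ℕ} {T : M.Hsp x →L[ℂ] M.Hsp x} (hT : M.IsBranchOp x i T)
    (z : M.Rclass x) (hz : (z : ℝ) ∉ M.F i '' M.Ipart i) :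
    (star T * T) (M.dvec z) = 0 := by
  rw [ContinuousLinearMap.mul_apply, hT.2 z hz, map_zero]

end MarkovSystem


/-- For `x ∈ E_f`, the range projections `P_i = T_i T_i*` are nonzero pairwise
orthogonal projections, and `Q_i P_j = a_{ij} P_j` where `Q_i = T_i* T_i`. -/
theorem range_projections_orthogonal {n : ℕ} (M : MarkovSystem n) (hM : IsMarkov M)
    {x : ℝ} (hx : x ∈ M.Esc)
    (T : ℕ → (M.Hsp x →L[ℂ] M.Hsp x)) (hT : ∀ i < n, M.IsBranchOp x i (T i)) :
    (∀ i < n, T i * star (T i) ≠ 0 ∧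
      IsSelfAdjoint (T i * star (T i)) ∧
      (T i * star (T i)) * (T i * star (T i)) = T i * star (T i)) ∧
    (∀ i < n, ∀ j < n, i ≠ j → (T i * star (T i)) * (T j * star (T j)) = 0) ∧
    (∀ i < n, ∀ j < n, (star (T i) * T i) * (T j * star (T j)) =
      if M.trans i j then T j * star (T j) else 0) := by
  open MarkovSystem in
  refine ⟨?_, ?_, ?_⟩
  · intro i hi
    refine ⟨?_, IsSelfAdjoint.mul_star_self (T i), ?_⟩
    · obtain ⟨u, huR, huI⟩ := exists_mem_Rclass_Ipart hM hx hi
      intro h0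
      have hP := P_dvec_mem hM hx hi (hT i hi) ⟨u, huR⟩ huI
      rw [h0] at hP
      exact dvec_ne_zero ⟨u, huR⟩ (by simpa using hP.symm)
    · refine clm_ext fun z => ?_
      rw [ContinuousLinearMap.mul_apply]
      by_cases hz : (z : ℝ) ∈ M.Ipart i
      · rw [P_dvec_mem hM hx hi (hT i hi) z hz,
          P_dvec_mem hM hx hi (hT i hi) z hz]
      · rw [P_dvec_not hM hx hi (hT i hi) z hz, map_zero]
  · intro i hi j hj hij
    refine clm_ext fun z => ?_
    rw [ContinuousLinearMap.mul_apply, ContinuousLinearMap.zero_apply]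
    by_cases hzj : (z : ℝ) ∈ M.Ipart j
    · rw [P_dvec_mem hM hx hj (hT j hj) z hzj]
      have hzi : (z : ℝ) ∉ M.Ipart i := fun h =>
        Rclass_not_Bdry hM hx z.2 (M.mem_Bdry_of_overlap hi hj hij h hzj)
      rw [P_dvec_not hM hx hi (hT i hi) z hzi]
    · rw [P_dvec_not hM hx hj (hT j hj) z hzj, map_zero]
  · intro i hi j hj
    by_cases ht : M.trans i j
    · rw [if_pos ht]
      refine clm_ext fun z => ?_
      rw [ContinuousLinearMap.mul_apply]
      by_cases hzj : (z : ℝ) ∈ M.Ipart j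
      · rw [P_dvec_mem hM hx hj (hT j hj) z hzj,
          Q_dvec_mem hM hx hi (hT i hi) z (subset_image_of_trans hM hi hj ht hzj)]
      · rw [P_dvec_not hM hx hj (hT j hj) z hzj, map_zero]
    · rw [if_neg ht]
      refine clm_ext fun z => ?_
      rw [ContinuousLinearMap.mul_apply, ContinuousLinearMap.zero_apply]
      by_cases hzj : (z : ℝ) ∈ M.Ipart j
      · rw [P_dvec_mem hM hx hj (hT j hj) z hzj]
        have hzim : (z : ℝ) ∉ M.F i '' M.Ipart i := fun h =>
          ht (trans_of_mem hM hx hi hj z.2 hzj h)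
        rw [Q_dvec_not (hT i hi) z hzim]
      · rw [P_dvec_not hM hx hj (hT j hj) z hzj, map_zero]
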